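/- Let d ≥ 1, λ ∈ ℝ, and let B : ℝ^d → ℝ^{d×d} be continuous, bounded and antisymmetric (B_{lj} = −B_{jl}). Then for all f, g ∈ S(ℝ^{2d}) and every X = (x,ξ) ∈ ℝ^{2d}, the magnetic Moyal product converges pointwise to the ordinary product as ε → 0: lim_{ε→0} (f ⋆^B_{ε,λ} g)(X) = f(X) g(X). (This is the zeroth-order term (f ⋆ g)_{(0,0)} = f·g of the asymptotic expansion of the magnetic Weyl product.) -/

import Mathlib

noncomputable section
open MeasureTheory Complex Filter

/-- `ℝ^d` -/
abbrev Vd (d : ℕ) := Fin d → ℝ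

/-- Euclidean dot product. -/
def dotR {d : ℕ} (x y : Vd d) : ℝ := ∑ l, x l * y l

/-- The symplectic form `σ((x,ξ),(y,η)) = ξ·y - x·η`. -/
def symp {d : ℕ} (X Y : Vd d × Vd d) : ℝ := dotR X.2 Y.1 - dotR X.1 Y.2

/-- The symplectic Fourier transform `(F_σ f)(Y) = (2π)^{-d} ∫ e^{iσ(Y,X)} f(X) dX`. -/
def symFT {d : ℕ} (f : Vd d × Vd d → ℂ) (Y : Vd d × Vd d) : ℂ :=
  (((2 * Real.pi) ^ d)⁻¹ : ℝ) *
    ∫ X : Vd d × Vd d, Complex.exp (Complex.I * symp Y X) * f X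

/-- `B̃^ε_{lj}(x,y,z) := (1/2)∫_{-1/2}^{1/2}dt ∫_0^1 ds s [B_{lj}(x+εs(ty-z/2)) + B_{lj}(x+εs(y/2+tz))]`. -/
def Btil {d : ℕ} (ε : ℝ) (B : Vd d → Fin d → Fin d → ℝ) (x y z : Vd d)
    (l j : Fin d) : ℝ :=
  (2:ℝ)⁻¹ * ∫ t in (-(2:ℝ)⁻¹)..(2:ℝ)⁻¹, ∫ s in (0:ℝ)..1,
    s * (B (x + (ε * s) • (t • y - (2:ℝ)⁻¹ • z)) l j
          + B (x + (ε * s) • ((2:ℝ)⁻¹ • y + t • z)) l j)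

/-- The scaled magnetic flux `γ^B_ε(x,y,z) := ε Σ_{l,j} B̃^ε_{lj}(x,y,z) y_l z_j`. -/
def gammaB {d : ℕ} (ε : ℝ) (B : Vd d → Fin d → Fin d → ℝ) (x y z : Vd d) : ℝ :=
  ε * ∑ l, ∑ j, Btil ε B x y z l j * y l * z j

/-- The magnetic Moyal product
`(f ⋆^B_{ε,λ} g)(X) = (2π)^{-2d} ∫∫ e^{iσ(X,Y+Z)} e^{i(ε/2)σ(Y,Z) - iλγ^B_ε(x,y,z)} (F_σf)(Y) (F_σg)(Z) dY dZ`. -/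
def moyalB {d : ℕ} (ε lam : ℝ) (B : Vd d → Fin d → Fin d → ℝ)
    (f g : Vd d × Vd d → ℂ) (X : Vd d × Vd d) : ℂ :=
  (((2 * Real.pi) ^ (2 * d))⁻¹ : ℝ) * ∫ Y : Vd d × Vd d, ∫ Z : Vd d × Vd d,
    Complex.exp (Complex.I * symp X (Y + Z)) *
      Complex.exp (Complex.I * (ε / 2) * symp Y Z
        - Complex.I * lam * gammaB ε B X.1 Y.1 Z.1) *
      symFT f Y * symFT g Z

/-! Put `ψ (x, ξ) := (x, ξ) ∈ ℝ^{2d}` (Euclidean) and `Φ := ψ ∘ J`, so that `σ(Y, X) = ⟪Φ Y, ψ X⟫`.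
Then `F_σ f` is `(2π)^{-d}` times the inverse Euclidean Fourier transform of `f ∘ ψ⁻¹` evaluated at
`(2π)⁻¹ Φ Y`; hence `F_σ` maps Schwartz functions to integrable continuous functions and is an
involution.

The integrand of `f ⋆^B_{ε,λ} g` has modulus `|F_σ f(Y)| |F_σ g(Z)|`, integrable on `ℝ^{4d}`
independently of `ε`, and converges pointwise as `ε → 0` since
`|γ^B_ε(x,y,z)| ≤ |ε| M ∑ |y_l| |z_j|` for `|B| ≤ M`; continuity of `B` makes it measurable.
By dominated convergence the product tends to its value at `ε = 0`, where the phase factorises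
into `e^{iσ(X,Y)} e^{iσ(X,Z)}`, and `F_σ² = 1` identifies it with `f(X) g(X)`. -/

open scoped FourierTransform RealInnerProductSpace SchwartzMap Topology

abbrev Wd (d : ℕ) := EuclideanSpace ℝ (Fin d ⊕ Fin d)

lemma symp_anticomm {d : ℕ} (X Y : Vd d × Vd d) : symp X Y = -symp Y X := by
  simp only [symp, dotR, neg_sub, mul_comm]

lemma symp_add_right {d : ℕ} (X Y Z : Vd d × Vd d) : symp X (Y + Z) = symp X Y + symp X Z := by
  simp only [symp, dotR, Prod.fst_add, Prod.snd_add, Pi.add_apply, mul_add, Finset.sum_add_distrib]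
  ring

section Coordinates

variable (d : ℕ)

def euclidCoord : (Vd d × Vd d) ≃L[ℝ] Wd d :=
  (ContinuousLinearEquiv.sumPiEquivProdPi ℝ (Fin d) (Fin d) fun _ => ℝ).symm.trans
    (EuclideanSpace.equiv (Fin d ⊕ Fin d) ℝ).symm

/-- The symplectic rotation `J (x, ξ) = (ξ, -x)`. -/
def symplJ : (Vd d × Vd d) ≃L[ℝ] (Vd d × Vd d) :=
  (ContinuousLinearEquiv.prodComm ℝ _ _).trans
    ((ContinuousLinearEquiv.refl ℝ _).prodCongr (ContinuousLinearEquiv.neg ℝ))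

def dualCoord : (Vd d × Vd d) ≃L[ℝ] Wd d := (symplJ d).trans (euclidCoord d)

lemma measurePreserving_euclidCoord : MeasurePreserving (euclidCoord d) :=
  (PiLp.volume_preserving_toLp _).comp
    (volume_measurePreserving_sumPiEquivProdPi_symm fun _ : Fin d ⊕ Fin d => ℝ)

lemma measurePreserving_symplJ : MeasurePreserving (symplJ d) := by
  rw [Measure.volume_eq_prod]
  exact ((MeasurePreserving.id volume).prod (Measure.measurePreserving_neg volume)).comp
    Measure.measurePreserving_swap

lemma measurePreserving_dualCoord : MeasurePreserving (dualCoord d) :=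
  (measurePreserving_euclidCoord d).comp (measurePreserving_symplJ d)

variable {d}

lemma euclidCoord_apply (X : Vd d × Vd d) :
    euclidCoord d X = WithLp.toLp 2 (Sum.elim X.1 X.2) := by
  ext (i | i) <;> rfl

lemma inner_dualCoord_euclidCoord (Y X : Vd d × Vd d) :
    ⟪dualCoord d Y, euclidCoord d X⟫ = symp Y X := by
  simp [dualCoord, euclidCoord_apply, symplJ, symp, dotR, PiLp.inner_apply,
    Fintype.sum_sum_type, mul_comm, sub_eq_add_neg]

end Coordinates

section SymplecticFourier

variable {d : ℕ}

lemma integral_exp_symp_mul (F : Vd d × Vd d → ℂ) (Y : Vd d × Vd d) :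
    ∫ X, exp (I * symp Y X) * F X
      = 𝓕⁻ (F ∘ (euclidCoord d).symm) ((2 * Real.pi)⁻¹ • dualCoord d Y) := by
  rw [Real.fourierInv_eq', ← (measurePreserving_euclidCoord d).integral_comp
    (euclidCoord d).toHomeomorph.measurableEmbedding]
  congr 1 with X
  have hphase : 2 * Real.pi * ⟪euclidCoord d X, (2 * Real.pi)⁻¹ • dualCoord d Y⟫ = symp Y X := by
    rw [real_inner_smul_right, real_inner_comm, inner_dualCoord_euclidCoord]
    field_simp
  rw [← hphase]
  simp [mul_comm I]

lemma symFT_eq_fourierInv (F : Vd d × Vd d → ℂ) (Y : Vd d × Vd d) :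
    symFT F Y = ((2 * Real.pi) ^ d)⁻¹ •
      𝓕⁻ (F ∘ (euclidCoord d).symm) ((2 * Real.pi)⁻¹ • dualCoord d Y) := by
  rw [symFT, integral_exp_symp_mul, Complex.real_smul]

def toEuclid (f : 𝓢(Vd d × Vd d, ℂ)) : 𝓢(Wd d, ℂ) :=
  SchwartzMap.compCLMOfContinuousLinearEquiv ℝ (euclidCoord d).symm f

lemma symFT_schwartz (f : 𝓢(Vd d × Vd d, ℂ)) :
    symFT f = fun Y => ((2 * Real.pi) ^ d)⁻¹ •
      𝓕⁻ (toEuclid f) ((2 * Real.pi)⁻¹ • dualCoord d Y) := by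
  ext Y
  rw [symFT_eq_fourierInv, SchwartzMap.fourierInv_coe]
  rfl

lemma continuous_symFT (f : 𝓢(Vd d × Vd d, ℂ)) : Continuous (symFT f) := by
  rw [symFT_schwartz]
  fun_prop

lemma integrable_symFT (f : 𝓢(Vd d × Vd d, ℂ)) : Integrable (symFT f) := by
  rw [symFT_schwartz]
  refine Integrable.smul (((2 * Real.pi) ^ d)⁻¹ : ℝ) ?_
  exact (measurePreserving_dualCoord d).integrable_comp_emb
    (dualCoord d).toHomeomorph.measurableEmbedding |>.mpr
    ((𝓕⁻ (toEuclid f)).integrable.comp_smul (inv_ne_zero Real.two_pi_pos.ne'))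

lemma integrable_norm_symFT_mul_norm_symFT (f g : 𝓢(Vd d × Vd d, ℂ)) :
    Integrable fun P : (Vd d × Vd d) × (Vd d × Vd d) => ‖symFT f P.1‖ * ‖symFT g P.2‖ := by
  rw [Measure.volume_eq_prod]
  exact (integrable_symFT f).norm.mul_prod (integrable_symFT g).norm

lemma symFT_symFT (f : 𝓢(Vd d × Vd d, ℂ)) : symFT (symFT f) = f := by
  ext X
  set G := 𝓕⁻ (toEuclid f)
  set a := euclidCoord d X
  set H : Wd d → ℂ := fun v => exp (↑(-2 * Real.pi * ⟪v, a⟫) * I) • G v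
  have hchange : ∫ Y, exp (I * symp X Y) * symFT f Y
      = ((2 * Real.pi) ^ d)⁻¹ • ∫ w, H ((2 * Real.pi)⁻¹ • w) := by
    rw [← integral_smul, ← (measurePreserving_dualCoord d).integral_comp
      (dualCoord d).toHomeomorph.measurableEmbedding]
    congr 1 with Y
    have hphase : -2 * Real.pi * ⟪(2 * Real.pi)⁻¹ • dualCoord d Y, a⟫ = symp X Y := by
      rw [real_inner_smul_left, inner_dualCoord_euclidCoord, symp_anticomm]
      field_simp
    rw [symFT_schwartz, ← hphase, mul_comm I, smul_comm]
    rfl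
  have hscale : ∫ w, H ((2 * Real.pi)⁻¹ • w) = ((2 * Real.pi) ^ (d + d) : ℝ) • f X := by
    rw [Measure.integral_comp_smul, finrank_euclideanSpace, Fintype.card_sum, Fintype.card_fin,
      inv_pow, inv_inv, abs_of_pos (by positivity)]
    congr 1
    calc ∫ x, H x = 𝓕 (⇑G) a := (Real.fourier_eq' _ _).symm
      _ = f X := by simp [G, a, ← SchwartzMap.fourier_coe, toEuclid]
  rw [symFT, hchange, hscale, smul_smul, Complex.real_smul, ← mul_assoc, ← Complex.ofReal_mul,
    pow_add]
  field_simp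
  rw [Complex.ofReal_one, one_mul]

end SymplecticFourier

section MagneticFlux

variable {d : ℕ} {B : Vd d → Fin d → Fin d → ℝ}

lemma continuous_Btil (hB : ∀ l j, Continuous fun x => B x l j) (ε : ℝ) (x : Vd d)
    (l j : Fin d) : Continuous fun p : Vd d × Vd d => Btil ε B x p.1 p.2 l j := by
  refine continuous_const.mul
    (intervalIntegral.continuous_parametric_intervalIntegral_of_continuous' ?_ _ _)
  refine intervalIntegral.continuous_parametric_intervalIntegral_of_continuous' ?_ _ _
  exact continuous_snd.mul (((hB l j).comp (by fun_prop)).add ((hB l j).comp (by fun_prop)))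

lemma continuous_gammaB (hB : ∀ l j, Continuous fun x => B x l j) (ε : ℝ) (x : Vd d) :
    Continuous fun p : Vd d × Vd d => gammaB ε B x p.1 p.2 := by
  unfold gammaB
  have := continuous_Btil hB ε x
  fun_prop

lemma abs_Btil_le {M : ℝ} (hM : ∀ x l j, |B x l j| ≤ M) (ε : ℝ) (x y z : Vd d) (l j : Fin d) :
    |Btil ε B x y z l j| ≤ M := by
  have hinner : ∀ t : ℝ, ‖∫ s in (0:ℝ)..1, s * (B (x + (ε * s) • (t • y - (2:ℝ)⁻¹ • z)) l j
      + B (x + (ε * s) • ((2:ℝ)⁻¹ • y + t • z)) l j)‖ ≤ 2 * M := by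
    intro t
    refine (intervalIntegral.norm_integral_le_of_norm_le_const (C := 2 * M) fun s hs => ?_).trans_eq
      (by norm_num)
    rw [Set.uIoc_of_le zero_le_one] at hs
    rw [Real.norm_eq_abs, abs_mul, abs_of_pos hs.1, two_mul]
    exact (mul_le_of_le_one_left (abs_nonneg _) hs.2).trans
      ((abs_add_le _ _).trans (add_le_add (hM _ _ _) (hM _ _ _)))
  have houter := intervalIntegral.norm_integral_le_of_norm_le_const
    (a := -(2:ℝ)⁻¹) (b := (2:ℝ)⁻¹) fun t _ => hinner t
  rw [Btil, abs_mul, abs_of_pos (by norm_num)]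
  norm_num at houter ⊢
  linarith

lemma gammaB_zero (x y z : Vd d) : gammaB 0 B x y z = 0 := by
  simp [gammaB]

lemma abs_gammaB_le {M : ℝ} (hM : ∀ x l j, |B x l j| ≤ M) (ε : ℝ) (x y z : Vd d) :
    |gammaB ε B x y z| ≤ |ε| * ∑ l, ∑ j, M * |y l| * |z j| := by
  rw [gammaB, abs_mul]
  gcongr
  refine (Finset.abs_sum_le_sum_abs _ _).trans (Finset.sum_le_sum fun l _ => ?_)
  refine (Finset.abs_sum_le_sum_abs _ _).trans (Finset.sum_le_sum fun j _ => ?_)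
  rw [abs_mul, abs_mul]
  gcongr
  exact abs_Btil_le hM ε x y z l j

lemma tendsto_gammaB {M : ℝ} (hM : ∀ x l j, |B x l j| ≤ M) (x y z : Vd d) :
    Tendsto (fun ε => gammaB ε B x y z) (𝓝 0) (𝓝 0) := by
  refine squeeze_zero_norm (fun ε => abs_gammaB_le hM ε x y z) ?_
  simpa using (continuous_abs.tendsto (0:ℝ)).mul_const _

end MagneticFlux

section MoyalProduct

variable {d : ℕ} (ε lam : ℝ) (B : Vd d → Fin d → Fin d → ℝ) (f g : Vd d × Vd d → ℂ)
  (X : Vd d × Vd d)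

def moyalIntegrand (P : (Vd d × Vd d) × (Vd d × Vd d)) : ℂ :=
  Complex.exp (Complex.I * symp X (P.1 + P.2)) *
    Complex.exp (Complex.I * (ε / 2) * symp P.1 P.2
      - Complex.I * lam * gammaB ε B X.1 P.1.1 P.2.1) *
    symFT f P.1 * symFT g P.2

lemma norm_moyalIntegrand (P : (Vd d × Vd d) × (Vd d × Vd d)) :
    ‖moyalIntegrand ε lam B f g X P‖ = ‖symFT f P.1‖ * ‖symFT g P.2‖ := by
  have hphase : Complex.I * (ε / 2) * symp P.1 P.2 - Complex.I * lam * gammaB ε B X.1 P.1.1 P.2.1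
      = ((ε / 2 * symp P.1 P.2 - lam * gammaB ε B X.1 P.1.1 P.2.1 : ℝ) : ℂ) * Complex.I := by
    push_cast; ring
  rw [moyalIntegrand, hphase, mul_comm Complex.I, norm_mul, norm_mul, norm_mul,
    Complex.norm_exp_ofReal_mul_I, Complex.norm_exp_ofReal_mul_I, one_mul, one_mul]

lemma tendsto_moyalIntegrand {M : ℝ} (hM : ∀ x l j, |B x l j| ≤ M)
    (P : (Vd d × Vd d) × (Vd d × Vd d)) :
    Tendsto (fun ε => moyalIntegrand ε lam B f g X P) (𝓝 0)
      (𝓝 (moyalIntegrand 0 lam B f g X P)) := by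
  have hγ : Tendsto (fun ε => (gammaB ε B X.1 P.1.1 P.2.1 : ℂ)) (𝓝 0)
      (𝓝 (gammaB 0 B X.1 P.1.1 P.2.1 : ℂ)) := by
    rw [gammaB_zero]
    exact (Complex.continuous_ofReal.tendsto 0).comp (tendsto_gammaB hM X.1 P.1.1 P.2.1)
  have hε : Tendsto (fun ε : ℝ => (ε : ℂ)) (𝓝 0) (𝓝 ((0 : ℝ) : ℂ)) :=
    Complex.continuous_ofReal.tendsto 0
  unfold moyalIntegrand
  exact ((((((hε.div_const 2).const_mul _).mul_const _).sub (hγ.const_mul _)).cexp.const_mul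
    _).mul_const _).mul_const _

variable {ε lam B}

lemma continuous_moyalIntegrand (hB : ∀ l j, Continuous fun x => B x l j)
    (f g : 𝓢(Vd d × Vd d, ℂ)) : Continuous (moyalIntegrand ε lam B f g X) := by
  have hsymp : Continuous fun P : (Vd d × Vd d) × (Vd d × Vd d) => symp P.1 P.2 := by
    unfold symp dotR
    fun_prop
  have hγ := (continuous_gammaB hB ε X.1).comp
    (continuous_fst.fst.prodMk continuous_snd.fst :
      Continuous fun P : (Vd d × Vd d) × (Vd d × Vd d) => (P.1.1, P.2.1))
  have hf := continuous_symFT f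
  have hg := continuous_symFT g
  unfold moyalIntegrand
  fun_prop

lemma integrable_moyalIntegrand (hB : ∀ l j, Continuous fun x => B x l j)
    (f g : 𝓢(Vd d × Vd d, ℂ)) : Integrable (moyalIntegrand ε lam B f g X) :=
  (integrable_norm_symFT_mul_norm_symFT f g).mono'
    (continuous_moyalIntegrand X hB f g).aestronglyMeasurable
    (.of_forall fun P => (norm_moyalIntegrand ε lam B f g X P).le)

lemma moyalB_eq_integral_moyalIntegrand (hB : ∀ l j, Continuous fun x => B x l j)
    (f g : 𝓢(Vd d × Vd d, ℂ)) :
    moyalB ε lam B f g X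
      = (((2 * Real.pi) ^ (2 * d))⁻¹ : ℝ) * ∫ P, moyalIntegrand ε lam B f g X P := by
  have hint := integrable_moyalIntegrand X hB f g (ε := ε) (lam := lam)
  rw [Measure.volume_eq_prod] at hint ⊢
  exact congrArg _ (integral_prod _ hint).symm

lemma tendsto_moyalB (hBcont : ∀ l j, Continuous fun x => B x l j) {M : ℝ}
    (hM : ∀ x l j, |B x l j| ≤ M) (f g : 𝓢(Vd d × Vd d, ℂ)) :
    Tendsto (fun ε => moyalB ε lam B f g X) (𝓝 0) (𝓝 (moyalB 0 lam B f g X)) := by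
  simp only [moyalB_eq_integral_moyalIntegrand X hBcont]
  exact (tendsto_integral_filter_of_dominated_convergence _
    (.of_forall fun ε => (continuous_moyalIntegrand X hBcont f g).aestronglyMeasurable)
    (.of_forall fun ε => .of_forall fun P => (norm_moyalIntegrand ε lam B f g X P).le)
    (integrable_norm_symFT_mul_norm_symFT f g)
    (.of_forall (tendsto_moyalIntegrand lam B f g X hM))).const_mul _

lemma moyalB_zero (f g : 𝓢(Vd d × Vd d, ℂ)) : moyalB 0 lam B f g X = f X * g X := by
  have hfactor : ∀ Y Z, moyalIntegrand 0 lam B f g X (Y, Z)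
      = (exp (I * symp X Y) * symFT f Y) * (exp (I * symp X Z) * symFT g Z) := by
    intro Y Z
    simp only [moyalIntegrand, gammaB_zero, symp_add_right, Complex.ofReal_add,
      Complex.ofReal_zero, zero_div, mul_zero, zero_mul, sub_self, Complex.exp_zero, mul_one,
      mul_add, Complex.exp_add]
    ring
  conv_rhs => rw [← symFT_symFT f, ← symFT_symFT g]
  trans (((2 * Real.pi) ^ (2 * d))⁻¹ : ℝ) *
    ∫ Y, ∫ Z, (exp (I * symp X Y) * symFT f Y) * (exp (I * symp X Z) * symFT g Z)
  · exact congrArg _ (integral_congr_ae (.of_forall fun Y =>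
      integral_congr_ae (.of_forall fun Z => hfactor Y Z)))
  simp only [integral_const_mul, integral_mul_const, symFT, two_mul, pow_add]
  push_cast
  ring

end MoyalProduct

theorem statement8_general (d : ℕ) (lam : ℝ)
    (B : Vd d → Fin d → Fin d → ℝ)
    (hBcont : ∀ l j, Continuous fun x => B x l j)
    (hBbdd : ∃ M, ∀ (x : Vd d) (l j : Fin d), |B x l j| ≤ M)
    (f g : SchwartzMap (Vd d × Vd d) ℂ) (X : Vd d × Vd d) :
    Tendsto (fun ε : ℝ => moyalB ε lam B (⇑f) (⇑g) X) (nhds 0)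
      (nhds (f X * g X)) := by
  obtain ⟨M, hM⟩ := hBbdd
  rw [← moyalB_zero X f g (lam := lam) (B := B)]
  exact tendsto_moyalB X hBcont hM f g

/-- The magnetic Moyal product converges pointwise to the ordinary product as `ε → 0`:
the zeroth-order term of the asymptotic expansion is `(f ⋆ g)_{(0,0)} = f·g`. -/
theorem statement8 (d : ℕ) (hd : 1 ≤ d) (lam : ℝ)
    (B : Vd d → Fin d → Fin d → ℝ)
    (hBcont : ∀ l j, Continuous fun x => B x l j)
    (hBbdd : ∃ M, ∀ (x : Vd d) (l j : Fin d), |B x l j| ≤ M)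
    (hBanti : ∀ (x : Vd d) (l j : Fin d), B x l j = -B x j l)
    (f g : SchwartzMap (Vd d × Vd d) ℂ) (X : Vd d × Vd d) :
    Tendsto (fun ε : ℝ => moyalB ε lam B (⇑f) (⇑g) X) (nhds 0)
      (nhds (f X * g X)) :=
  statement8_general d lam B hBcont hBbdd f g X
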